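/- arXiv:1306.5150 — 2 statements merged into one kernel-verified Lean document; each statement's English description precedes it below -/
import Mathlib

section
/- Let n, N be positive integers, let α^1, …, α^n, β be Hermitian N×N complex matrices, m > 0, ω ∈ ℝ, let F: ℂ^N → ℝ be continuous, and let φ: ℝ^n → ℂ^N be a Schwartz function with F∘φ integrable. If the function λ ↦ E(φ_λ) − ω Q(φ_λ), where φ_λ(x) = φ(x/λ), has vanishing derivative at λ = 1, then n ω Q(φ) = (n−1) K(φ) + n ( M(φ) + V(φ) ) (the first Pohozaev/stationarity relation). -/
open Matrix MeasureTheory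

/-- The Hermitian inner product on `ℂ^N`, conjugate-linear in the first argument. -/
noncomputable def cInner {N : ℕ} (v w : Fin N → ℂ) : ℂ := ∑ i, (starRingEnd ℂ) (v i) * w i

/-- The charge `Q(φ) = ∫ |φ(x)|² dx`. -/
noncomputable def Qfun {n N : ℕ} (φ : (Fin n → ℝ) → (Fin N → ℂ)) : ℝ :=
  ∫ x, ∑ i, Complex.normSq (φ x i)

/-- The kinetic functional `K(φ) = ∫ ⟨φ(x), −i Σ_j α^j ∂_j φ(x)⟩ dx`. -/
noncomputable def Kfun {n N : ℕ} (α : Fin n → Matrix (Fin N) (Fin N) ℂ)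
    (φ : (Fin n → ℝ) → (Fin N → ℂ)) : ℂ :=
  ∫ x, cInner (φ x) ((-Complex.I) • ∑ j, (α j).mulVec (fderiv ℝ φ x (Pi.single j 1)))

/-- The mass term `M(φ) = m ∫ ⟨φ(x), β φ(x)⟩ dx`. -/
noncomputable def Mfun {n N : ℕ} (β : Matrix (Fin N) (Fin N) ℂ) (m : ℝ)
    (φ : (Fin n → ℝ) → (Fin N → ℂ)) : ℂ :=
  (m : ℂ) * ∫ x, cInner (φ x) (β.mulVec (φ x))

/-- The potential term `V(φ) = −∫ F(φ(x)) dx`. -/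
noncomputable def Vfun {n N : ℕ} (F : (Fin N → ℂ) → ℝ)
    (φ : (Fin n → ℝ) → (Fin N → ℂ)) : ℝ :=
  - ∫ x, F (φ x)

/-- The energy `E(φ) = K(φ) + M(φ) + V(φ)`. -/
noncomputable def Efun {n N : ℕ} (α : Fin n → Matrix (Fin N) (Fin N) ℂ)
    (β : Matrix (Fin N) (Fin N) ℂ) (m : ℝ) (F : (Fin N → ℂ) → ℝ)
    (φ : (Fin n → ℝ) → (Fin N → ℂ)) : ℂ :=
  Kfun α φ + Mfun β m φ + (Vfun F φ : ℂ)

lemma cInner_smul_right {N : ℕ} (a : ℂ) (v w : Fin N → ℂ) :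
    cInner v (a • w) = a * cInner v w := by
  simp only [cInner, Pi.smul_apply, smul_eq_mul, Finset.mul_sum]
  exact Finset.sum_congr rfl fun i _ => by ring

lemma scale_aux {n : ℕ} {E : Type*} [NormedAddCommGroup E] [NormedSpace ℝ E]
    (f : (Fin n → ℝ) → E) {lam : ℝ} (hlam : 0 < lam) :
    ∫ x, f (lam⁻¹ • x) = lam ^ n • ∫ x, f x := by
  simpa [Module.finrank_fin_fun] using
    MeasureTheory.Measure.integral_comp_inv_smul_of_nonneg
      (volume : Measure (Fin n → ℝ)) f hlam.le

/-- fderiv of scaled function. -/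
lemma fderiv_scale {n N : ℕ} (φ : SchwartzMap (Fin n → ℝ) (Fin N → ℂ)) (c : ℝ)
    (x v : Fin n → ℝ) :
    fderiv ℝ (fun y => φ (c • y)) x v = c • fderiv ℝ (⇑φ) (c • x) v := by
  have hL : HasFDerivAt (fun y : Fin n → ℝ => c • y)
      (c • ContinuousLinearMap.id ℝ (Fin n → ℝ)) x :=
    ((c • ContinuousLinearMap.id ℝ (Fin n → ℝ)).hasFDerivAt)
  have h := (φ.differentiableAt.hasFDerivAt (x := c • x)).comp x hL
  have h' : HasFDerivAt (fun y => φ (c • y))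
      ((fderiv ℝ (⇑φ) (c • x)).comp (c • ContinuousLinearMap.id ℝ (Fin n → ℝ))) x := h
  rw [h'.fderiv]
  simp [ContinuousLinearMap.map_smul]

/-- if the function `λ ↦ E(φ_λ) − ω Q(φ_λ)`, with `φ_λ(x) = φ(x/λ)`, has
vanishing derivative at `λ = 1`, then `n ω Q(φ) = (n−1) K(φ) + n (M(φ) + V(φ))`
(the first Pohozaev/stationarity relation). -/
theorem stmt_5 {n N : ℕ} (hn : 0 < n) (hN : 0 < N)
    (α : Fin n → Matrix (Fin N) (Fin N) ℂ) (β : Matrix (Fin N) (Fin N) ℂ)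
    (hα : ∀ j, (α j).IsHermitian) (hβ : β.IsHermitian)
    (m : ℝ) (hm : 0 < m) (ω : ℝ) (F : (Fin N → ℂ) → ℝ) (hF : Continuous F)
    (φ : SchwartzMap (Fin n → ℝ) (Fin N → ℂ))
    (hint : Integrable (fun x => F (φ x)))
    (hderiv : HasDerivAt
      (fun lam : ℝ =>
        Efun α β m F (fun x => φ (lam⁻¹ • x)) -
          (ω : ℂ) * (Qfun (fun x => φ (lam⁻¹ • x)) : ℝ))
      0 1) :
    (n : ℂ) * (ω : ℂ) * (Qfun ⇑φ : ℝ) =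
      ((n : ℂ) - 1) * Kfun α ⇑φ + (n : ℂ) * (Mfun β m ⇑φ + (Vfun F ⇑φ : ℝ)) := by
  set A : ℂ := Kfun α ⇑φ with hA
  set B : ℂ := Mfun β m ⇑φ + (Vfun F ⇑φ : ℝ) - (ω : ℂ) * (Qfun ⇑φ : ℝ) with hB
  -- scaling identities
  have key : ∀ lam : ℝ, 0 < lam →
      (Efun α β m F (fun x => φ (lam⁻¹ • x)) -
        (ω : ℂ) * (Qfun (fun x => φ (lam⁻¹ • x)) : ℝ))
      = A * (lam : ℂ) ^ (n - 1) + B * (lam : ℂ) ^ n := by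
    intro lam hlam
    have hlam0 : (lam : ℂ) ≠ 0 := by exact_mod_cast hlam.ne'
    have hQ : Qfun (fun x => φ (lam⁻¹ • x)) = lam ^ n * Qfun ⇑φ := by
      unfold Qfun
      simpa [smul_eq_mul] using
        scale_aux (fun y => ∑ i, Complex.normSq (φ y i)) hlam
    have hM : Mfun β m (fun x => φ (lam⁻¹ • x)) = (lam : ℂ) ^ n * Mfun β m ⇑φ := by
      unfold Mfun
      rw [scale_aux (fun y => cInner (φ y) (β.mulVec (φ y))) hlam]
      push_cast [Complex.real_smul]
      ring
    have hV : ((Vfun F (fun x => φ (lam⁻¹ • x)) : ℝ) : ℂ)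
        = (lam : ℂ) ^ n * (Vfun F ⇑φ : ℝ) := by
      unfold Vfun
      rw [scale_aux (fun y => F (φ y)) hlam]
      push_cast [smul_eq_mul]
      ring
    have hK : Kfun α (fun x => φ (lam⁻¹ • x)) = (lam : ℂ) ^ (n - 1) * Kfun α ⇑φ := by
      unfold Kfun
      have h1 : ∀ x : Fin n → ℝ,
          cInner (φ (lam⁻¹ • x))
            ((-Complex.I) • ∑ j, (α j).mulVec
              (fderiv ℝ (fun y => φ (lam⁻¹ • y)) x (Pi.single j 1)))
          = (lam⁻¹ : ℂ) *
            cInner (φ (lam⁻¹ • x))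
              ((-Complex.I) • ∑ j, (α j).mulVec
                (fderiv ℝ (⇑φ) (lam⁻¹ • x) (Pi.single j 1))) := by
        intro x
        have h2 : ∀ j : Fin n,
            (α j).mulVec (fderiv ℝ (fun y => φ (lam⁻¹ • y)) x (Pi.single j 1))
            = (lam⁻¹ : ℂ) • (α j).mulVec (fderiv ℝ (⇑φ) (lam⁻¹ • x) (Pi.single j 1)) := by
          intro j
          rw [fderiv_scale φ lam⁻¹ x (Pi.single j 1)]
          rw [show ((lam⁻¹ : ℝ) • fderiv ℝ (⇑φ) (lam⁻¹ • x) (Pi.single j 1))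
              = ((lam⁻¹ : ℝ) : ℂ) • fderiv ℝ (⇑φ) (lam⁻¹ • x) (Pi.single j 1) by
            ext i; simp [Complex.real_smul]]
          rw [Matrix.mulVec_smul]
          push_cast
          rfl
        simp only [h2, ← Finset.smul_sum]
        rw [smul_comm (-Complex.I) ((lam : ℂ)⁻¹), cInner_smul_right]
      calc ∫ x, cInner (φ (lam⁻¹ • x))
            ((-Complex.I) • ∑ j, (α j).mulVec
              (fderiv ℝ (fun y => φ (lam⁻¹ • y)) x (Pi.single j 1)))
          = ∫ x, (lam⁻¹ : ℂ) * ((fun y => cInner (φ y)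
              ((-Complex.I) • ∑ j, (α j).mulVec
                (fderiv ℝ (⇑φ) y (Pi.single j 1)))) (lam⁻¹ • x)) := by
            exact integral_congr_ae (Filter.Eventually.of_forall fun x => h1 x)
        _ = (lam⁻¹ : ℂ) * ∫ x, (fun y => cInner (φ y)
              ((-Complex.I) • ∑ j, (α j).mulVec
                (fderiv ℝ (⇑φ) y (Pi.single j 1)))) (lam⁻¹ • x) :=
            integral_const_mul _ _
        _ = (lam⁻¹ : ℂ) * (lam ^ n • ∫ x, cInner (φ x)
              ((-Complex.I) • ∑ j, (α j).mulVec
                (fderiv ℝ (⇑φ) x (Pi.single j 1)))) := by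
            rw [scale_aux (fun y => cInner (φ y)
              ((-Complex.I) • ∑ j, (α j).mulVec
                (fderiv ℝ (⇑φ) y (Pi.single j 1)))) hlam]
        _ = (lam : ℂ) ^ (n - 1) * Kfun α ⇑φ := by
            rw [Kfun]
            push_cast [Complex.real_smul]
            rw [show (lam : ℂ) ^ n = (lam : ℂ) ^ (n - 1) * lam by
              rw [← pow_succ, Nat.sub_add_cancel hn]]
            field_simp
    unfold Efun
    rw [hK, hM, hV, hQ]
    push_cast
    rw [hA, hB]
    ring
  -- derivative of the model function
  have hk : ∀ k : ℕ, HasDerivAt (fun lam : ℝ => ((lam : ℂ)) ^ k) (k : ℂ) 1 := by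
    intro k
    have h := (hasDerivAt_pow k (1 : ℝ)).ofReal_comp
    simpa using h
  have hg : HasDerivAt (fun lam : ℝ => A * (lam : ℂ) ^ (n - 1) + B * (lam : ℂ) ^ n)
      (A * ((n - 1 : ℕ) : ℂ) + B * (n : ℂ)) 1 :=
    ((hk (n - 1)).const_mul A).add ((hk n).const_mul B)
  have heq : (fun lam : ℝ =>
        Efun α β m F (fun x => φ (lam⁻¹ • x)) -
          (ω : ℂ) * (Qfun (fun x => φ (lam⁻¹ • x)) : ℝ))
      =ᶠ[nhds 1] (fun lam : ℝ => A * (lam : ℂ) ^ (n - 1) + B * (lam : ℂ) ^ n) := by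
    filter_upwards [isOpen_Ioi.mem_nhds (show (0:ℝ) < 1 by norm_num)] with lam hlam
    exact key lam hlam
  have hderiv' : HasDerivAt
      (fun lam : ℝ =>
        Efun α β m F (fun x => φ (lam⁻¹ • x)) -
          (ω : ℂ) * (Qfun (fun x => φ (lam⁻¹ • x)) : ℝ))
      (A * ((n - 1 : ℕ) : ℂ) + B * (n : ℂ)) 1 :=
    hg.congr_of_eventuallyEq heq
  have h0 : A * ((n - 1 : ℕ) : ℂ) + B * (n : ℂ) = 0 := hderiv'.unique hderiv
  have hcast : ((n - 1 : ℕ) : ℂ) = (n : ℂ) - 1 := by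
    push_cast [Nat.cast_sub hn]
    ring
  rw [hcast] at h0
  rw [hB] at h0
  linear_combination -h0
end

section
/- Let g, f: (0,∞) → ℝ be differentiable and define φ: ℝ³ \ {0} → ℂ⁴ in Cartesian coordinates by φ(x) = ( g(r), 0, i f(r) x³/r, i f(r) (x¹ + i x²)/r ), where r = |x|. Let Σ₁ = diag(σ₁, σ₁) and Σ₂ = diag(σ₂, σ₂) with σ₁, σ₂ the first two Pauli matrices, and define Θ₁(x) = i Σ₁ φ(x) + 2 ( x² ∂₃ φ(x) − x³ ∂₂ φ(x) ) and Θ₂(x) = i Σ₂ φ(x) + 2 ( x³ ∂₁ φ(x) − x¹ ∂₃ φ(x) ). Then for every x ≠ 0: Θ₁(x) = −i Θ₂(x). (Equivalently, in the real formulation, Θ₁ = 𝕁Θ₂, so that ⟨Θ₁, 𝕁Θ₂⟩ = ⟨Θ₁, Θ₁⟩ > 0 whenever Θ₁ ≠ 0.) -/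
open Matrix


private lemma I_pow_three : Complex.I ^ 3 = -Complex.I := by
  rw [show (3:ℕ) = 2 + 1 from rfl, pow_succ, Complex.I_sq]; ring

private def P (k : Fin 3) : (Fin 3 → ℝ) →L[ℝ] ℝ := ContinuousLinearMap.proj k

private noncomputable def Um (x : Fin 3 → ℝ) : (Fin 3 → ℝ) →L[ℝ] ℝ :=
  x 0 • P 0 + x 0 • P 0 + (x 1 • P 1 + x 1 • P 1) + (x 2 • P 2 + x 2 • P 2)

private noncomputable def Rm (x : Fin 3 → ℝ) : (Fin 3 → ℝ) →L[ℝ] ℝ :=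
  (1 / (2 * Real.sqrt (x 0 ^ 2 + x 1 ^ 2 + x 2 ^ 2))) • Um x

private noncomputable def DR (c : ℝ) (x : Fin 3 → ℝ) : (Fin 3 → ℝ) →L[ℝ] ℂ :=
  Complex.ofRealCLM.comp (c • Rm x)

private noncomputable def Em (k : Fin 3) : (Fin 3 → ℝ) →L[ℝ] ℂ :=
  Complex.ofRealCLM.comp (P k)

private lemma P_single (k m : Fin 3) : P k (Pi.single m 1) = if k = m then 1 else 0 := by
  simp [P, Pi.single_apply]

private lemma Em_single (k m : Fin 3) :
    Em k (Pi.single m 1) = if k = m then 1 else 0 := by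
  simp [Em, P_single]
  split <;> simp

private lemma Rm_single (x : Fin 3 → ℝ) (k : Fin 3) :
    Rm x (Pi.single k 1) = x k / Real.sqrt (x 0 ^ 2 + x 1 ^ 2 + x 2 ^ 2) := by
  rcases eq_or_ne (Real.sqrt (x 0 ^ 2 + x 1 ^ 2 + x 2 ^ 2)) 0 with h0 | h0
  · fin_cases k <;>
      simp [Rm, Um, P_single, smul_eq_mul, h0]
  · fin_cases k <;>
      · simp [Rm, Um, P_single, smul_eq_mul]
        field_simp
        ring

private lemma DR_single (c : ℝ) (x : Fin 3 → ℝ) (k : Fin 3) :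
    DR c x (Pi.single k 1)
      = ((c * (x k / Real.sqrt (x 0 ^ 2 + x 1 ^ 2 + x 2 ^ 2)) : ℝ) : ℂ) := by
  simp [DR, Rm_single, smul_eq_mul]

private lemma hUmF (x : Fin 3 → ℝ) :
    HasFDerivAt (fun y : Fin 3 → ℝ => y 0 ^ 2 + y 1 ^ 2 + y 2 ^ 2) (Um x) x := by
  have h0 : HasFDerivAt (fun y : Fin 3 → ℝ => y 0) (P 0) x := hasFDerivAt_apply 0 x
  have h1 : HasFDerivAt (fun y : Fin 3 → ℝ => y 1) (P 1) x := hasFDerivAt_apply 1 x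
  have h2 : HasFDerivAt (fun y : Fin 3 → ℝ => y 2) (P 2) x := hasFDerivAt_apply 2 x
  have := ((h0.mul h0).add (h1.mul h1)).add (h2.mul h2)
  unfold Um
  exact this.congr_of_eventuallyEq (Filter.Eventually.of_forall fun y => by simp [pow_two])

private lemma hRmF (x : Fin 3 → ℝ) (h : x 0 ^ 2 + x 1 ^ 2 + x 2 ^ 2 ≠ 0) :
    HasFDerivAt (fun y : Fin 3 → ℝ => Real.sqrt (y 0 ^ 2 + y 1 ^ 2 + y 2 ^ 2)) (Rm x) x :=
  (hUmF x).sqrt h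

set_option maxHeartbeats 2000000 in
/-- for the standard solitary-wave Ansatz
`φ(x) = (g(r), 0, i f(r) x³/r, i f(r)(x¹ + i x²)/r)` of the (3+1)D nonlinear Dirac
equation (with `g, f` differentiable on `(0,∞)`), the rotational null vectors
`Θ₁ = i Σ₁ φ + 2 (x² ∂₃ φ − x³ ∂₂ φ)` and `Θ₂ = i Σ₂ φ + 2 (x³ ∂₁ φ − x¹ ∂₃ φ)`
(`Σ_j = diag(σ_j, σ_j)`) satisfy `Θ₁(x) = −i Θ₂(x)` for every `x ≠ 0`. -/
theorem stmt_19 (g f : ℝ → ℝ)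
    (hg : ∀ r : ℝ, 0 < r → DifferentiableAt ℝ g r)
    (hf : ∀ r : ℝ, 0 < r → DifferentiableAt ℝ f r)
    (φ : (Fin 3 → ℝ) → (Fin 4 → ℂ))
    (hφ : ∀ x : Fin 3 → ℝ, φ x =
      ![((g (Real.sqrt (x 0 ^ 2 + x 1 ^ 2 + x 2 ^ 2)) : ℝ) : ℂ),
        0,
        Complex.I * ((f (Real.sqrt (x 0 ^ 2 + x 1 ^ 2 + x 2 ^ 2)) : ℝ) : ℂ) *
          ((x 2 : ℝ) : ℂ) / ((Real.sqrt (x 0 ^ 2 + x 1 ^ 2 + x 2 ^ 2) : ℝ) : ℂ),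
        Complex.I * ((f (Real.sqrt (x 0 ^ 2 + x 1 ^ 2 + x 2 ^ 2)) : ℝ) : ℂ) *
          (((x 0 : ℝ) : ℂ) + Complex.I * ((x 1 : ℝ) : ℂ)) /
          ((Real.sqrt (x 0 ^ 2 + x 1 ^ 2 + x 2 ^ 2) : ℝ) : ℂ)])
    (Θ₁ Θ₂ : (Fin 3 → ℝ) → (Fin 4 → ℂ))
    (hΘ₁ : ∀ x : Fin 3 → ℝ, Θ₁ x =
      Complex.I • (!![0, 1, 0, 0; 1, 0, 0, 0; 0, 0, 0, 1; 0, 0, 1, 0] :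
          Matrix (Fin 4) (Fin 4) ℂ).mulVec (φ x)
        + (2 : ℝ) • ((x 1) • fderiv ℝ φ x (Pi.single 2 1)
            - (x 2) • fderiv ℝ φ x (Pi.single 1 1)))
    (hΘ₂ : ∀ x : Fin 3 → ℝ, Θ₂ x =
      Complex.I • (!![0, -Complex.I, 0, 0; Complex.I, 0, 0, 0;
            0, 0, 0, -Complex.I; 0, 0, Complex.I, 0] :
          Matrix (Fin 4) (Fin 4) ℂ).mulVec (φ x)
        + (2 : ℝ) • ((x 2) • fderiv ℝ φ x (Pi.single 0 1)
            - (x 0) • fderiv ℝ φ x (Pi.single 2 1))) :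
    ∀ x : Fin 3 → ℝ, x ≠ 0 → Θ₁ x = (-Complex.I) • Θ₂ x := by
  intro x hx
  have hxsum : 0 < x 0 ^ 2 + x 1 ^ 2 + x 2 ^ 2 := by
    by_contra h
    push_neg at h
    have h0 : x 0 = 0 := by nlinarith [sq_nonneg (x 0), sq_nonneg (x 1), sq_nonneg (x 2)]
    have h1 : x 1 = 0 := by nlinarith [sq_nonneg (x 0), sq_nonneg (x 1), sq_nonneg (x 2)]
    have h2 : x 2 = 0 := by nlinarith [sq_nonneg (x 0), sq_nonneg (x 1), sq_nonneg (x 2)]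
    exact hx (funext fun k => by fin_cases k
                                 · exact h0
                                 · exact h1
                                 · exact h2)
  have hrpos : 0 < Real.sqrt (x 0 ^ 2 + x 1 ^ 2 + x 2 ^ 2) := Real.sqrt_pos.mpr hxsum
  set r : ℝ := Real.sqrt (x 0 ^ 2 + x 1 ^ 2 + x 2 ^ 2) with hr_def
  have hrne : r ≠ 0 := ne_of_gt hrpos
  have hrc : (r : ℂ) ≠ 0 := by exact_mod_cast hrne
  have hrF : HasFDerivAt (fun y : Fin 3 → ℝ => Real.sqrt (y 0 ^ 2 + y 1 ^ 2 + y 2 ^ 2))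
      (Rm x) x := hRmF x (ne_of_gt hxsum)
  -- the radial profile q(s) = f(s)/s
  set q : ℝ → ℝ := fun s => f s / s with hq_def
  have hqd : DifferentiableAt ℝ q r := (hf r hrpos).div differentiableAt_id hrne
  -- component derivatives
  have hc0 : HasFDerivAt
      (fun y : Fin 3 → ℝ => ((g (Real.sqrt (y 0 ^ 2 + y 1 ^ 2 + y 2 ^ 2)) : ℝ) : ℂ))
      (DR (deriv g r) x) x :=
    Complex.ofRealCLM.hasFDerivAt.comp x ((hg r hrpos).hasDerivAt.comp_hasFDerivAt x hrF)
  have hQC : HasFDerivAt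
      (fun y : Fin 3 → ℝ => ((q (Real.sqrt (y 0 ^ 2 + y 1 ^ 2 + y 2 ^ 2)) : ℝ) : ℂ))
      (DR (deriv q r) x) x :=
    by have := hqd.hasDerivAt.comp_hasFDerivAt x hrF; exact Complex.ofRealCLM.hasFDerivAt.comp x this
  have hX0 : HasFDerivAt (fun y : Fin 3 → ℝ => ((y 0 : ℝ) : ℂ)) (Em 0) x :=
    Complex.ofRealCLM.hasFDerivAt.comp x (hasFDerivAt_apply 0 x)
  have hX1 : HasFDerivAt (fun y : Fin 3 → ℝ => ((y 1 : ℝ) : ℂ)) (Em 1) x :=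
    Complex.ofRealCLM.hasFDerivAt.comp x (hasFDerivAt_apply 1 x)
  have hX2 : HasFDerivAt (fun y : Fin 3 → ℝ => ((y 2 : ℝ) : ℂ)) (Em 2) x :=
    Complex.ofRealCLM.hasFDerivAt.comp x (hasFDerivAt_apply 2 x)
  have hc2 : HasFDerivAt
      (fun y : Fin 3 → ℝ =>
        (Complex.I * ((q (Real.sqrt (y 0 ^ 2 + y 1 ^ 2 + y 2 ^ 2)) : ℝ) : ℂ))
          * ((y 2 : ℝ) : ℂ))
      ((Complex.I * ((q r : ℝ) : ℂ)) • Em 2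
        + ((x 2 : ℝ) : ℂ) • (Complex.I • DR (deriv q r) x)) x :=
    (hQC.const_mul Complex.I).mul hX2
  have hc3 : HasFDerivAt
      (fun y : Fin 3 → ℝ =>
        (Complex.I * ((q (Real.sqrt (y 0 ^ 2 + y 1 ^ 2 + y 2 ^ 2)) : ℝ) : ℂ))
          * (((y 0 : ℝ) : ℂ) + Complex.I * ((y 1 : ℝ) : ℂ)))
      ((Complex.I * ((q r : ℝ) : ℂ)) • (Em 0 + Complex.I • Em 1)
        + (((x 0 : ℝ) : ℂ) + Complex.I * ((x 1 : ℝ) : ℂ))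
            • (Complex.I • DR (deriv q r) x)) x :=
    (hQC.const_mul Complex.I).mul (hX0.add (hX1.const_mul Complex.I))
  -- assemble the full derivative
  have hΦ : HasFDerivAt φ (ContinuousLinearMap.pi
      ![DR (deriv g r) x, 0,
        (Complex.I * ((q r : ℝ) : ℂ)) • Em 2
          + ((x 2 : ℝ) : ℂ) • (Complex.I • DR (deriv q r) x),
        (Complex.I * ((q r : ℝ) : ℂ)) • (Em 0 + Complex.I • Em 1)
          + (((x 0 : ℝ) : ℂ) + Complex.I * ((x 1 : ℝ) : ℂ))
              • (Complex.I • DR (deriv q r) x)]) x := by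
    refine hasFDerivAt_pi'' (fun i => ?_)
    rw [ContinuousLinearMap.proj_pi]
    have hφ0 : (fun y => φ y 0)
        = fun y : Fin 3 → ℝ => ((g (Real.sqrt (y 0 ^ 2 + y 1 ^ 2 + y 2 ^ 2)) : ℝ) : ℂ) := by
      funext y; rw [hφ y]; simp
    have hφ1 : (fun y => φ y 1) = fun _ : Fin 3 → ℝ => (0 : ℂ) := by
      funext y; rw [hφ y]; simp
    have hφ2 : (fun y => φ y 2)
        = fun y : Fin 3 → ℝ =>
          (Complex.I * ((q (Real.sqrt (y 0 ^ 2 + y 1 ^ 2 + y 2 ^ 2)) : ℝ) : ℂ))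
            * ((y 2 : ℝ) : ℂ) := by
      funext y; rw [hφ y]
      show Complex.I * _ * _ / _ = _
      rw [hq_def]
      try push_cast
      ring
    have hφ3 : (fun y => φ y 3)
        = fun y : Fin 3 → ℝ =>
          (Complex.I * ((q (Real.sqrt (y 0 ^ 2 + y 1 ^ 2 + y 2 ^ 2)) : ℝ) : ℂ))
            * (((y 0 : ℝ) : ℂ) + Complex.I * ((y 1 : ℝ) : ℂ)) := by
      funext y; rw [hφ y]
      show Complex.I * _ * _ / _ = _
      rw [hq_def]
      try push_cast
      ring
    fin_cases i
    · exact hφ0 ▸ hc0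
    · exact hφ1 ▸ hasFDerivAt_const (0 : ℂ) x
    · exact hφ2 ▸ hc2
    · exact hφ3 ▸ hc3
  have hfd : fderiv ℝ φ x = _ := hΦ.fderiv
  -- evaluate the derivative on coordinate directions
  have hv : ∀ k : Fin 3, fderiv ℝ φ x (Pi.single k 1) =
      ![((deriv g r * (x k / r) : ℝ) : ℂ),
        0,
        (Complex.I * ((q r : ℝ) : ℂ)) * (if (2 : Fin 3) = k then 1 else 0)
          + ((x 2 : ℝ) : ℂ) * (Complex.I * ((deriv q r * (x k / r) : ℝ) : ℂ)),
        (Complex.I * ((q r : ℝ) : ℂ)) * ((if (0 : Fin 3) = k then 1 else 0)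
            + Complex.I * (if (1 : Fin 3) = k then 1 else 0))
          + (((x 0 : ℝ) : ℂ) + Complex.I * ((x 1 : ℝ) : ℂ))
              * (Complex.I * ((deriv q r * (x k / r) : ℝ) : ℂ))] := by
    intro k
    rw [hfd]
    funext j
    fin_cases j <;>
      simp [DR_single, Em_single, smul_eq_mul, ← hr_def] <;> fin_cases k <;> simp [Fin.ext_iff]
  funext j
  rw [hΘ₁ x, hΘ₂ x, hφ x, hv 0, hv 1, hv 2]
  have hsimp : True := trivial
  fin_cases j
  · simp [Matrix.mulVec, dotProduct, Fin.sum_univ_four, Complex.real_smul, Fin.ext_iff, hq_def,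
      Matrix.vecHead, Matrix.vecTail, Function.comp]
    try simp only [← hr_def]
    try push_cast
    ring
  · simp [Matrix.mulVec, dotProduct, Fin.sum_univ_four, Complex.real_smul, Fin.ext_iff, hq_def,
      Matrix.vecHead, Matrix.vecTail, Function.comp]
    try simp only [← hr_def]
    try push_cast
    linear_combination (Complex.I * ((g r : ℝ) : ℂ)) * Complex.I_sq
  · simp [Matrix.mulVec, dotProduct, Fin.sum_univ_four, Complex.real_smul, Fin.ext_iff, hq_def,
      Matrix.vecHead, Matrix.vecTail, Function.comp]
    try simp only [← hr_def]
    try push_cast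
    linear_combination
      ((((f r : ℝ) : ℂ) * (((x 0 : ℝ) : ℂ) + Complex.I * ((x 1 : ℝ) : ℂ)) / ((r : ℝ) : ℂ))
          * (2 - Complex.I ^ 2)
        - 2 * ((f r : ℝ) : ℂ) * ((x 0 : ℝ) : ℂ) / ((r : ℝ) : ℂ)) * Complex.I_sq
  · simp [Matrix.mulVec, dotProduct, Fin.sum_univ_four, Complex.real_smul, Fin.ext_iff, hq_def,
      Matrix.vecHead, Matrix.vecTail, Function.comp]
    try simp only [← hr_def]
    try push_cast
    linear_combination
      (((f r : ℝ) : ℂ) * ((x 2 : ℝ) : ℂ) / ((r : ℝ) : ℂ) * Complex.I ^ 2) * Complex.I_sq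
end
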